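/- Let Ω be an n×n real symmetric positive definite matrix and let b > 0. Then the equation γ(Ω, θ) = b admits a unique solution θ > 0 satisfying Ω − θIₙ positive definite. -/

import Mathlib

/-
Diagonalising `Ω = U diag(μ) Uᴴ`, one gets `γ(Ω, θ) = ½ ∑ᵢ ψ(1 - θ / μᵢ)` with
`ψ d = d⁻¹ - 1 + log d` (`gammaScalar`), and `Ω - θ I` is positive definite iff `θ < min μᵢ`.
Since `log x < x - 1` for `x ≠ 1`, `ψ` is strictly decreasing on `(0, 1]` with `ψ 1 = 0` and
`ψ d ≥ (2d)⁻¹ - 1`, so `θ ↦ γ(Ω, θ)` increases strictly and continuously from `0` to `+∞` on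
`[0, min μᵢ)`: the intermediate value theorem gives a solution, strict monotonicity its uniqueness.
-/

/-- The function γ(Ω, θ) = (1/2)(tr((I − θΩ⁻¹)⁻¹ − I) + log det(I − θΩ⁻¹)). -/
noncomputable def gammaFn {n : ℕ} (Ω : Matrix (Fin n) (Fin n) ℝ) (θ : ℝ) : ℝ :=
  (1 / 2) * (Matrix.trace ((1 - θ • Ω⁻¹)⁻¹ - 1) + Real.log ((1 - θ • Ω⁻¹).det))

open Matrix Unitary

noncomputable def gammaScalar (d : ℝ) : ℝ := d⁻¹ - 1 + Real.log d

lemma gammaScalar_one : gammaScalar 1 = 0 := by simp [gammaScalar]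

lemma gammaScalar_nonneg {d : ℝ} (hd : 0 < d) : 0 ≤ gammaScalar d := by
  have := Real.log_le_sub_one_of_pos (inv_pos.mpr hd)
  rw [Real.log_inv] at this
  unfold gammaScalar
  linarith

lemma inv_two_mul_sub_one_le_gammaScalar {d : ℝ} (hd : 0 < d) :
    (2 * d)⁻¹ - 1 ≤ gammaScalar d := by
  have hlog := Real.log_le_sub_one_of_pos (inv_pos.mpr (mul_pos two_pos hd))
  rw [Real.log_inv, Real.log_mul two_ne_zero hd.ne'] at hlog
  have hlog2 : Real.log 2 < 1 := by linarith [Real.log_two_lt_d9]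
  have hhalf : (2 * d)⁻¹ = d⁻¹ / 2 := by rw [mul_inv, mul_comm]; ring
  unfold gammaScalar
  linarith

lemma gammaScalar_strictAntiOn : StrictAntiOn gammaScalar (Set.Ioc 0 1) := by
  rintro a ⟨ha, -⟩ b ⟨hb, hb1⟩ hab
  have hlog : Real.log (b / a) < b / a - 1 :=
    Real.log_lt_sub_one_of_pos (div_pos hb ha) fun h => hab.ne' ((div_eq_one_iff_eq ha.ne').mp h)
  have hfrac : b / a - 1 ≤ a⁻¹ - b⁻¹ := by
    rw [div_sub_one ha.ne', inv_sub_inv ha.ne' hb.ne', div_le_div_iff₀ ha (mul_pos ha hb)]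
    nlinarith [mul_nonneg (mul_nonneg (sub_nonneg.2 hab.le) ha.le) (sub_nonneg.2 hb1)]
  rw [Real.log_div hb.ne' ha.ne'] at hlog
  unfold gammaScalar
  linarith

lemma continuousOn_gammaScalar : ContinuousOn gammaScalar (Set.Ioi 0) :=
  ((continuousOn_inv₀.mono fun _ h => ne_of_gt h).sub continuousOn_const).add
    (Real.continuousOn_log.mono fun _ h => ne_of_gt h)

lemma strictMonoOn_gammaScalar_one_sub_div {μ : ℝ} (hμ : 0 < μ) :
    StrictMonoOn (fun θ => gammaScalar (1 - θ / μ)) (Set.Ico 0 μ) := by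
  have hmaps : ∀ θ ∈ Set.Ico 0 μ, 1 - θ / μ ∈ Set.Ioc 0 1 := fun θ hθ =>
    ⟨by rw [sub_pos, div_lt_one hμ]; exact hθ.2, by linarith [div_nonneg hθ.1 hμ.le]⟩
  intro x hx y hy hxy
  exact gammaScalar_strictAntiOn (hmaps y hy) (hmaps x hx) (by gcongr)

lemma continuousOn_gammaScalar_one_sub_div {μ : ℝ} (hμ : 0 < μ) :
    ContinuousOn (fun θ => gammaScalar (1 - θ / μ)) (Set.Iio μ) :=
  continuousOn_gammaScalar.comp (by fun_prop) fun θ hθ => by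
    simpa [sub_pos, div_lt_one hμ] using hθ

lemma exists_le_half_sum_gammaScalar {ι : Type*} [Fintype ι] {μ : ι → ℝ} {i₀ : ι}
    (hμ₀ : 0 < μ i₀) (hi₀ : ∀ i, μ i₀ ≤ μ i) {b : ℝ} (hb : 0 ≤ b) :
    ∃ θ ∈ Set.Ico 0 (μ i₀), b ≤ 1 / 2 * ∑ i, gammaScalar (1 - θ / μ i) := by
  set d := (4 * b + 2)⁻¹
  have hd : 0 < d := by positivity
  have hd1 : d < 1 := inv_lt_one_of_one_lt₀ (by linarith)
  refine ⟨μ i₀ * (1 - d), ⟨by nlinarith, by nlinarith⟩, ?_⟩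
  have hpos : ∀ i, 0 < 1 - μ i₀ * (1 - d) / μ i := fun i => by
    have hμi := hμ₀.trans_le (hi₀ i)
    rw [sub_pos, div_lt_one hμi]
    nlinarith [hi₀ i]
  have hd₀ : 1 - μ i₀ * (1 - d) / μ i₀ = d := by field_simp; ring
  have hsingle := Finset.single_le_sum (fun i _ => gammaScalar_nonneg (hpos i))
    (Finset.mem_univ i₀)
  have hbound := inv_two_mul_sub_one_le_gammaScalar hd
  have hinv : (2 * d)⁻¹ - 1 = 2 * b := by simp only [d]; field_simp; ring
  rw [hd₀] at hsingle
  linarith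

theorem existsUnique_half_sum_gammaScalar_eq {ι : Type*} [Fintype ι] [Nonempty ι] {μ : ι → ℝ}
    (hμ : ∀ i, 0 < μ i) {b : ℝ} (hb : 0 < b) :
    ∃! θ, 0 < θ ∧ (∀ i, θ < μ i) ∧ 1 / 2 * ∑ i, gammaScalar (1 - θ / μ i) = b := by
  obtain ⟨i₀, hi₀⟩ := Finite.exists_min μ
  set G : ℝ → ℝ := fun θ => 1 / 2 * ∑ i, gammaScalar (1 - θ / μ i)
  have hlt_iff : ∀ θ, (∀ i, θ < μ i) ↔ θ < μ i₀ :=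
    fun θ => ⟨fun h => h i₀, fun h i => h.trans_le (hi₀ i)⟩
  have hmono : StrictMonoOn G (Set.Ico 0 (μ i₀)) := fun x hx y hy hxy =>
    mul_lt_mul_of_pos_left (Finset.sum_lt_sum_of_nonempty Finset.univ_nonempty fun i _ =>
      strictMonoOn_gammaScalar_one_sub_div (hμ i) (Set.Ico_subset_Ico_right (hi₀ i) hx)
        (Set.Ico_subset_Ico_right (hi₀ i) hy) hxy) one_half_pos
  have hcont : ContinuousOn G (Set.Ico 0 (μ i₀)) :=
    continuousOn_const.mul <| continuousOn_finsetSum _ fun i _ =>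
      (continuousOn_gammaScalar_one_sub_div (hμ i)).mono fun θ hθ => (hlt_iff θ).2 hθ.2 i
  have hG0 : G 0 = 0 := by simp [G, gammaScalar_one]
  obtain ⟨θ₁, hθ₁, hbθ₁⟩ := exists_le_half_sum_gammaScalar (hμ i₀) hi₀ hb.le
  obtain ⟨θ, hθ, hGθ⟩ := intermediate_value_Icc hθ₁.1
    (hcont.mono (Set.Icc_subset_Ico_right hθ₁.2)) ⟨hG0.le.trans hb.le, hbθ₁⟩
  have hθIco : θ ∈ Set.Ico 0 (μ i₀) := ⟨hθ.1, hθ.2.trans_lt hθ₁.2⟩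
  refine ⟨θ, ⟨hθ.1.lt_of_ne ?_, (hlt_iff θ).2 hθIco.2, hGθ⟩, ?_⟩
  · rintro rfl
    exact hb.ne' (hGθ ▸ hG0)
  · rintro θ' ⟨hθ'0, hθ'μ, hGθ'⟩
    exact hmono.injOn ⟨hθ'0.le, (hlt_iff θ').1 hθ'μ⟩ hθIco (hGθ'.trans hGθ.symm)

section UnitaryConj

variable {ι R : Type*} [Fintype ι] [DecidableEq ι] [CommRing R] [StarRing R]
  (U : unitary (Matrix ι ι R)) (A : Matrix ι ι R)

lemma det_conjStarAlgAut : (conjStarAlgAut R _ U A).det = A.det := by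
  rw [conjStarAlgAut_apply, det_mul, det_mul, mul_right_comm, ← det_mul,
    mul_star_self_of_mem U.2, det_one, one_mul]

lemma trace_conjStarAlgAut : (conjStarAlgAut R _ U A).trace = A.trace := by
  rw [conjStarAlgAut_apply, trace_mul_cycle, star_mul_self_of_mem U.2, one_mul]

lemma inv_conjStarAlgAut : (conjStarAlgAut R _ U A)⁻¹ = conjStarAlgAut R _ U A⁻¹ := by
  rw [conjStarAlgAut_apply, conjStarAlgAut_apply, Matrix.mul_inv_rev, Matrix.mul_inv_rev,
    inv_eq_left_inv (mul_star_self_of_mem U.2), inv_eq_left_inv (star_mul_self_of_mem U.2),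
    mul_assoc]

lemma posDef_conjStarAlgAut_iff [PartialOrder R] :
    (conjStarAlgAut R _ U A).PosDef ↔ A.PosDef :=
  isUnit_coe.posDef_star_right_conjugate_iff

end UnitaryConj

lemma inv_diagonal_of_ne_zero {ι K : Type*} [Fintype ι] [DecidableEq ι] [Field K] {v : ι → K}
    (hv : ∀ i, v i ≠ 0) : (diagonal v)⁻¹ = diagonal v⁻¹ :=
  inv_eq_right_inv <| by simp [diagonal_mul_diagonal, hv]

lemma posDef_sub_smul_one_iff {ι : Type*} [Fintype ι] [DecidableEq ι] {Ω : Matrix ι ι ℝ}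
    (hΩ : Ω.IsHermitian) (θ : ℝ) : (Ω - θ • 1).PosDef ↔ ∀ i, θ < hΩ.eigenvalues i := by
  conv_lhs => rw [hΩ.spectral_theorem, ← map_one (conjStarAlgAut ℝ _ hΩ.eigenvectorUnitary),
    ← map_smul, ← map_sub, posDef_conjStarAlgAut_iff, smul_one_eq_diagonal, diagonal_sub,
    posDef_diagonal_iff]
  simp [sub_pos]

lemma gammaFn_eq_half_sum {n : ℕ} {Ω : Matrix (Fin n) (Fin n) ℝ} (hΩ : Ω.IsHermitian)
    (hμ : ∀ i, hΩ.eigenvalues i ≠ 0) {θ : ℝ} (hθ : ∀ i, θ ≠ hΩ.eigenvalues i) :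
    gammaFn Ω θ = 1 / 2 * ∑ i, gammaScalar (1 - θ / hΩ.eigenvalues i) := by
  set c := conjStarAlgAut ℝ _ hΩ.eigenvectorUnitary
  set d : Fin n → ℝ := fun i => 1 - θ / hΩ.eigenvalues i
  have hd : ∀ i, d i ≠ 0 := fun i => by
    simpa [d, sub_ne_zero, eq_div_iff (hμ i)] using (hθ i).symm
  have key : 1 - θ • Ω⁻¹ = c (diagonal d) := by
    conv_lhs =>
      rw [hΩ.spectral_theorem, inv_conjStarAlgAut, ← map_one c, ← map_smul, ← map_sub]
    congr 1
    rw [RCLike.ofReal_real_eq_id, Function.id_comp, inv_diagonal_of_ne_zero hμ, ← diagonal_one,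
      ← diagonal_smul, diagonal_sub]
    rfl
  rw [gammaFn, key, inv_conjStarAlgAut, ← map_one c, ← map_sub, trace_conjStarAlgAut,
    det_conjStarAlgAut, inv_diagonal_of_ne_zero hd, det_diagonal,
    Real.log_prod fun i _ => hd i, ← diagonal_one, diagonal_sub, trace_diagonal,
    ← Finset.sum_add_distrib]
  rfl

theorem stmt3 {n : ℕ} (hn : 0 < n) (Ω : Matrix (Fin n) (Fin n) ℝ)
    (hΩ : Ω.PosDef) (b : ℝ) (hb : 0 < b) :
    ∃! θ : ℝ, 0 < θ ∧ (Ω - θ • (1 : Matrix (Fin n) (Fin n) ℝ)).PosDef ∧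
      gammaFn Ω θ = b := by
  have : Nonempty (Fin n) := ⟨⟨0, hn⟩⟩
  have hμ := hΩ.eigenvalues_pos
  refine (existsUnique_congr fun θ => ?_).2 (existsUnique_half_sum_gammaScalar_eq hμ hb)
  rw [posDef_sub_smul_one_iff hΩ.1]
  refine and_congr_right fun _ => and_congr_right fun hθ => ?_
  rw [gammaFn_eq_half_sum hΩ.1 (fun i => (hμ i).ne') fun i => (hθ i).ne]
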